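/- Let n ≥ 2. Let f̃ : ℝ^{n×n} → ℝ be continuously differentiable, positive, and spectral (f̃(QZQᵀ) = f̃(Z) for every Q ∈ O(n) and every Z ∈ ℝ^{n×n}), with ∫_{SO(n)} f̃ dμ = 1. Fix R ∈ SO(n) and the score map G(Z) = (1/f̃(Z))·skew((∇f̃(Z))ᵀZ). For 1 ≤ p < q ≤ n define h_{pq}(Z) = ⟨G(Z), R·E_{pq}·Rᵀ⟩, where E_{pq} is the n×n matrix with (p,q) entry 1/√2, (q,p) entry −1/√2 and zeros elsewhere. Then the random variables h_{pq} are identically distributed under the density f̃: for every s ∈ ℝ and all index pairs (p,q), (r,s') with p<q, r<s', ∫_{{Z ∈ SO(n) : h_{pq}(Z) ≤ s}} f̃(Z) dμ(Z) = ∫_{{Z ∈ SO(n) : h_{rs'}(Z) ≤ s}} f̃(Z) dμ(Z). -/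

import Mathlib

open Matrix MeasureTheory Real

noncomputable section

attribute [local instance] Matrix.normedAddCommGroup Matrix.normedSpace

/-- The special orthogonal group `SO(n)`, as a set of `n × n` real matrices. -/
def SO (n : ℕ) : Set (Matrix (Fin n) (Fin n) ℝ) :=
  {A | A * Aᵀ = 1 ∧ A.det = 1}

/-- The orthogonal group `O(n)`, as a set of `n × n` real matrices. -/
def ON (n : ℕ) : Set (Matrix (Fin n) (Fin n) ℝ) :=
  {A | A * Aᵀ = 1}

instance {n : ℕ} : MeasurableSpace (Matrix (Fin n) (Fin n) ℝ) :=
  (inferInstance : MeasurableSpace (Fin n → Fin n → ℝ))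

/-- `μ` is the Haar probability measure of `SO(n)`. -/
def IsHaarSO (n : ℕ) (μ : Measure (Matrix (Fin n) (Fin n) ℝ)) : Prop :=
  IsProbabilityMeasure μ ∧ μ (SO n)ᶜ = 0 ∧
    (∀ g ∈ SO n, Measure.map (fun Z => g * Z) μ = μ) ∧
    (∀ g ∈ SO n, Measure.map (fun Z => Z * g) μ = μ)

/-- The skew-symmetric part `(A - Aᵀ)/2` of a square matrix. -/
def skewPart {n : ℕ} (A : Matrix (Fin n) (Fin n) ℝ) : Matrix (Fin n) (Fin n) ℝ :=
  (2 : ℝ)⁻¹ • (A - Aᵀ)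

/-- The Frobenius inner product `⟨A, B⟩ = trace(Aᵀ B)`. -/
def frobInner {n : ℕ} (A B : Matrix (Fin n) (Fin n) ℝ) : ℝ :=
  (Aᵀ * B).trace

/-- The Euclidean (Frobenius) gradient of `f : ℝ^{n×n} → ℝ`. -/
def grad {n : ℕ} (f : Matrix (Fin n) (Fin n) ℝ → ℝ) (Z : Matrix (Fin n) (Fin n) ℝ) :
    Matrix (Fin n) (Fin n) ℝ :=
  Matrix.of fun i j => fderiv ℝ f Z (Matrix.single i j 1)

/-- The score map `G(Z) = (1 / f(Z)) · skew((∇f(Z))ᵀ Z)`. -/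
def scoreG {n : ℕ} (f : Matrix (Fin n) (Fin n) ℝ → ℝ) (Z : Matrix (Fin n) (Fin n) ℝ) :
    Matrix (Fin n) (Fin n) ℝ :=
  (f Z)⁻¹ • skewPart ((grad f Z)ᵀ * Z)

/-- The elementary skew-symmetric matrix `E_{pq}` with `(p,q)` entry `1/√2`, `(q,p)` entry
`-1/√2` and zeros elsewhere. -/
def Ebasis {n : ℕ} (p q : Fin n) : Matrix (Fin n) (Fin n) ℝ :=
  (Real.sqrt 2)⁻¹ • (Matrix.single p q 1 - Matrix.single q p 1)

/-- `h_{pq}(Z) = ⟨G(Z), R · E_{pq} · Rᵀ⟩`. -/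
def hFun {n : ℕ} (f : Matrix (Fin n) (Fin n) ℝ → ℝ) (R : Matrix (Fin n) (Fin n) ℝ)
    (p q : Fin n) (Z : Matrix (Fin n) (Fin n) ℝ) : ℝ :=
  frobInner (scoreG f Z) (R * Ebasis p q * Rᵀ)

/-!
Conjugation `Z ↦ Q Z Qᵀ` by `Q ∈ SO(n)` preserves the Haar measure and the spectral function `f`,
and the score map is equivariant, `G(Q Z Qᵀ) = Q G(Z) Qᵀ`, by the chain rule through this linear
automorphism. Hence `h_{pq}(Q Z Qᵀ) = ⟨G(Z), Qᵀ R E_{pq} Rᵀ Q⟩`, and it suffices to find `Q` with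
`Qᵀ R E_{pq} Rᵀ Q = R E_{rs} Rᵀ`. Take `Q = R P Rᵀ`, where `P` is a permutation matrix sending the
pair `(p, q)` to `(r, s)`, with the sign of one coordinate `k ∉ {r, s}` flipped when the
permutation is odd; such a `k` exists unless `n = 2`, where the two pairs coincide.
-/

instance {n : ℕ} : BorelSpace (Matrix (Fin n) (Fin n) ℝ) := Pi.borelSpace

section SpecialOrthogonal

variable {n : ℕ} {A B Q : Matrix (Fin n) (Fin n) ℝ}

lemma mul_transpose_self_of_mem_ON (hQ : Q ∈ ON n) : Q * Qᵀ = 1 := hQ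

lemma transpose_mul_self_of_mem_ON (hQ : Q ∈ ON n) : Qᵀ * Q = 1 :=
  mul_eq_one_comm.mp hQ

lemma transpose_mul_conj_mul (hQ : Q ∈ ON n) (A : Matrix (Fin n) (Fin n) ℝ) :
    Qᵀ * (Q * A * Qᵀ) * Q = A := by
  simp only [← Matrix.mul_assoc, transpose_mul_self_of_mem_ON hQ, Matrix.one_mul]
  rw [Matrix.mul_assoc, transpose_mul_self_of_mem_ON hQ, Matrix.mul_one]

lemma mul_transpose_conj_mul (hQ : Q ∈ ON n) (A : Matrix (Fin n) (Fin n) ℝ) :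
    Q * (Qᵀ * A * Q) * Qᵀ = A := by
  simp only [← Matrix.mul_assoc, mul_transpose_self_of_mem_ON hQ, Matrix.one_mul]
  rw [Matrix.mul_assoc, mul_transpose_self_of_mem_ON hQ, Matrix.mul_one]

lemma mul_mem_SO (hA : A ∈ SO n) (hB : B ∈ SO n) : A * B ∈ SO n := by
  refine ⟨?_, by rw [det_mul, hA.2, hB.2, one_mul]⟩
  rw [transpose_mul, Matrix.mul_assoc, ← Matrix.mul_assoc B, hB.1, Matrix.one_mul, hA.1]

lemma transpose_mem_SO (hA : A ∈ SO n) : Aᵀ ∈ SO n :=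
  ⟨by rw [transpose_transpose]; exact transpose_mul_self_of_mem_ON hA.1,
    by rw [det_transpose, hA.2]⟩

lemma conj_mem_SO_iff (hQ : Q ∈ SO n) : Q * A * Qᵀ ∈ SO n ↔ A ∈ SO n := by
  refine ⟨fun h => ?_, fun h => mul_mem_SO (mul_mem_SO hQ h) (transpose_mem_SO hQ)⟩
  rw [← transpose_mul_conj_mul hQ.1 A]
  exact mul_mem_SO (mul_mem_SO (transpose_mem_SO hQ) h) hQ

end SpecialOrthogonal

section Conjugation

variable {n : ℕ} {Q : Matrix (Fin n) (Fin n) ℝ}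

def orthConj (Q : Matrix (Fin n) (Fin n) ℝ) (hQ : Q ∈ ON n) :
    Matrix (Fin n) (Fin n) ℝ ≃L[ℝ] Matrix (Fin n) (Fin n) ℝ :=
  LinearEquiv.toContinuousLinearEquiv
    { toFun := fun Z => Q * Z * Qᵀ
      invFun := fun Z => Qᵀ * Z * Q
      map_add' := fun Z W => by simp only [Matrix.mul_add, Matrix.add_mul]
      map_smul' := fun c Z => by simp only [Matrix.mul_smul, Matrix.smul_mul, RingHom.id_apply]
      left_inv := transpose_mul_conj_mul hQ
      right_inv := mul_transpose_conj_mul hQ }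

@[simp]
lemma orthConj_apply (hQ : Q ∈ ON n) (Z : Matrix (Fin n) (Fin n) ℝ) :
    orthConj Q hQ Z = Q * Z * Qᵀ := rfl

lemma measurableEmbedding_conj (hQ : Q ∈ ON n) :
    MeasurableEmbedding fun Z : Matrix (Fin n) (Fin n) ℝ => Q * Z * Qᵀ :=
  (orthConj Q hQ).toHomeomorph.measurableEmbedding

lemma measurePreserving_conj {μ : Measure (Matrix (Fin n) (Fin n) ℝ)} (hμ : IsHaarSO n μ)
    (hQ : Q ∈ SO n) : MeasurePreserving (fun Z => Q * Z * Qᵀ) μ μ := by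
  have hleft : MeasurePreserving (fun Z => Q * Z) μ μ :=
    ⟨(continuous_const.matrix_mul continuous_id).measurable, hμ.2.2.1 Q hQ⟩
  have hright : MeasurePreserving (fun Z => Z * Qᵀ) μ μ :=
    ⟨(continuous_id.matrix_mul continuous_const).measurable, hμ.2.2.2 Qᵀ (transpose_mem_SO hQ)⟩
  exact hright.comp hleft

end Conjugation

section Score

variable {n : ℕ} {f : Matrix (Fin n) (Fin n) ℝ → ℝ} {Q : Matrix (Fin n) (Fin n) ℝ}

lemma frobInner_eq_sum (A B : Matrix (Fin n) (Fin n) ℝ) :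
    frobInner A B = ∑ i, ∑ j, A i j * B i j := by
  simp only [frobInner, trace, diag, mul_apply, transpose_apply]
  exact Finset.sum_comm

lemma frobInner_single (A : Matrix (Fin n) (Fin n) ℝ) (i j : Fin n) :
    frobInner A (single i j 1) = A i j := by
  simp [frobInner_eq_sum, single_apply, ite_and]

lemma frobInner_conj (Q A B : Matrix (Fin n) (Fin n) ℝ) :
    frobInner (Q * A * Qᵀ) B = frobInner A (Qᵀ * B * Q) := by
  simp only [frobInner, transpose_mul, transpose_transpose, Matrix.mul_assoc]
  rw [trace_mul_comm Q]
  simp only [Matrix.mul_assoc]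

lemma fderiv_apply_eq_frobInner_grad (f : Matrix (Fin n) (Fin n) ℝ → ℝ)
    (Z M : Matrix (Fin n) (Fin n) ℝ) : fderiv ℝ f Z M = frobInner (grad f Z) M := by
  conv_lhs => rw [matrix_eq_sum_single M]
  simp only [map_sum, frobInner_eq_sum, grad, of_apply]
  refine Finset.sum_congr rfl fun i _ => Finset.sum_congr rfl fun j _ => ?_
  have hsingle : single i j (M i j) = M i j • single i j (1 : ℝ) := by
    rw [smul_single, smul_eq_mul, mul_one]
  rw [hsingle, map_smul, smul_eq_mul, mul_comm]

lemma grad_conj (hQ : Q ∈ ON n) (hf : ∀ Z, f (Q * Z * Qᵀ) = f Z) (Z : Matrix (Fin n) (Fin n) ℝ) :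
    grad f (Q * Z * Qᵀ) = Q * grad f Z * Qᵀ := by
  have hchain : fderiv ℝ f Z = (fderiv ℝ f (Q * Z * Qᵀ)).comp (orthConj Q hQ : _ →L[ℝ] _) := by
    have hchain := (orthConj Q hQ).comp_right_fderiv (f := f) (x := Z)
    change fderiv ℝ (fun W => f (Q * W * Qᵀ)) Z = fderiv ℝ f (Q * Z * Qᵀ) ∘SL _ at hchain
    rwa [show (fun W => f (Q * W * Qᵀ)) = f from funext hf] at hchain
  ext i j
  calc grad f (Q * Z * Qᵀ) i j = fderiv ℝ f (Q * Z * Qᵀ) (single i j 1) := rfl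
    _ = fderiv ℝ f Z (Qᵀ * single i j 1 * Q) := by
        rw [hchain, ContinuousLinearMap.comp_apply, ContinuousLinearEquiv.coe_coe,
          orthConj_apply, mul_transpose_conj_mul hQ]
    _ = (Q * grad f Z * Qᵀ) i j := by
        rw [fderiv_apply_eq_frobInner_grad, ← frobInner_conj Q, frobInner_single]

lemma skewPart_conj (Q A : Matrix (Fin n) (Fin n) ℝ) :
    skewPart (Q * A * Qᵀ) = Q * skewPart A * Qᵀ := by
  simp only [skewPart, transpose_mul, transpose_transpose, Matrix.smul_mul, Matrix.mul_smul,
    Matrix.mul_sub, Matrix.sub_mul, Matrix.mul_assoc]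

lemma scoreG_conj (hQ : Q ∈ ON n) (hf : ∀ Z, f (Q * Z * Qᵀ) = f Z)
    (Z : Matrix (Fin n) (Fin n) ℝ) : scoreG f (Q * Z * Qᵀ) = Q * scoreG f Z * Qᵀ := by
  have hprod : (Q * grad f Z * Qᵀ)ᵀ * (Q * Z * Qᵀ) = Q * ((grad f Z)ᵀ * Z) * Qᵀ := by
    simp only [transpose_mul, transpose_transpose, Matrix.mul_assoc]
    rw [← Matrix.mul_assoc Qᵀ Q, transpose_mul_self_of_mem_ON hQ, Matrix.one_mul]
  rw [scoreG, scoreG, hf, grad_conj hQ hf, hprod, skewPart_conj, Matrix.mul_smul,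
    Matrix.smul_mul]

lemma hFun_conj (hQ : Q ∈ ON n) (hf : ∀ Z, f (Q * Z * Qᵀ) = f Z)
    (R : Matrix (Fin n) (Fin n) ℝ) (p q : Fin n) (Z : Matrix (Fin n) (Fin n) ℝ) :
    hFun f R p q (Q * Z * Qᵀ) = frobInner (scoreG f Z) (Qᵀ * (R * Ebasis p q * Rᵀ) * Q) := by
  rw [hFun, scoreG_conj hQ hf, frobInner_conj Q]

end Score

section SignedPermutation

variable {n : ℕ}

lemma Equiv.Perm.exists_apply_eq_and_apply_eq {α : Type*} [DecidableEq α] {p q r s : α}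
    (hpq : p ≠ q) (hrs : r ≠ s) : ∃ σ : Equiv.Perm α, σ p = r ∧ σ q = s := by
  set τ := Equiv.swap p r
  have hτp : τ p = r := Equiv.swap_apply_left p r
  have hτq : τ q ≠ r := hτp ▸ τ.injective.ne hpq.symm
  refine ⟨Equiv.swap (τ q) s * τ, ?_, Equiv.swap_apply_left _ _⟩
  rw [Equiv.Perm.mul_apply, hτp, Equiv.swap_apply_of_ne_of_ne hτq.symm hrs]

lemma permMatrix_transpose_mul_Ebasis_mul (σ : Equiv.Perm (Fin n)) (p q : Fin n) :
    (σ.permMatrix ℝ)ᵀ * Ebasis p q * σ.permMatrix ℝ = Ebasis (σ p) (σ q) := by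
  simp [Ebasis, PEquiv.toMatrix_toPEquiv_mul, PEquiv.mul_toMatrix_toPEquiv, submatrix_sub]

lemma diagonal_mul_Ebasis_mul_diagonal {ε : Fin n → ℝ} {r s : Fin n} (hr : ε r = 1)
    (hs : ε s = 1) : diagonal ε * Ebasis r s * diagonal ε = Ebasis r s := by
  ext a b
  simp only [diagonal_mul, mul_diagonal, Ebasis, Matrix.smul_apply, Matrix.sub_apply,
    single_apply, smul_eq_mul]
  split_ifs with h₁ h₂ h₂
  · obtain ⟨rfl, rfl⟩ := h₁; rw [hr, hs]; ring
  · obtain ⟨rfl, rfl⟩ := h₁; rw [hr, hs]; ring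
  · obtain ⟨rfl, rfl⟩ := h₂; rw [hr, hs]; ring
  · ring

lemma permMatrix_mul_transpose_self (σ : Equiv.Perm (Fin n)) :
    σ.permMatrix ℝ * (σ.permMatrix ℝ)ᵀ = 1 := by
  rw [transpose_permMatrix, ← permMatrix_mul, inv_mul_cancel, permMatrix_one]

lemma exists_mem_SO_conj_Ebasis_of_ne {p q r s k : Fin n} (hpq : p ≠ q) (hrs : r ≠ s)
    (hkr : k ≠ r) (hks : k ≠ s) : ∃ P ∈ SO n, Pᵀ * Ebasis p q * P = Ebasis r s := by
  obtain ⟨σ, hσp, hσq⟩ := Equiv.Perm.exists_apply_eq_and_apply_eq hpq hrs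
  set c : ℝ := ((Equiv.Perm.sign σ : ℤ) : ℝ)
  have hcc : c * c = 1 := by
    simp only [c, ← Int.cast_mul, ← Units.val_mul, Int.units_mul_self, Units.val_one,
      Int.cast_one]
  set D := diagonal (Pi.mulSingle k c) with hD
  have hDD : D * D = 1 := by
    rw [hD, diagonal_mul_diagonal, ← diagonal_one]
    congr 1
    funext i
    rw [← Pi.mul_apply, ← Pi.mulSingle_mul, hcc, Pi.mulSingle_one, Pi.one_apply]
  refine ⟨σ.permMatrix ℝ * D, ⟨?_, ?_⟩, ?_⟩
  · rw [transpose_mul, diagonal_transpose, Matrix.mul_assoc, ← Matrix.mul_assoc D, hDD,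
      Matrix.one_mul, permMatrix_mul_transpose_self]
  · rw [det_mul, det_permutation, det_diagonal, Finset.prod_pi_mulSingle', if_pos
      (Finset.mem_univ k), hcc]
  · have hconj : (σ.permMatrix ℝ * D)ᵀ * Ebasis p q * (σ.permMatrix ℝ * D)
        = D * ((σ.permMatrix ℝ)ᵀ * Ebasis p q * σ.permMatrix ℝ) * D := by
      simp only [D, transpose_mul, diagonal_transpose, Matrix.mul_assoc]
    rw [hconj, permMatrix_transpose_mul_Ebasis_mul, hσp, hσq]
    exact diagonal_mul_Ebasis_mul_diagonal (Pi.mulSingle_eq_of_ne hkr.symm _)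
      (Pi.mulSingle_eq_of_ne hks.symm _)

lemma exists_mem_SO_conj_Ebasis {p q r s : Fin n} (hpq : p < q) (hrs : r < s) :
    ∃ P ∈ SO n, Pᵀ * Ebasis p q * P = Ebasis r s := by
  by_cases hk : ∃ k, k ≠ r ∧ k ≠ s
  · obtain ⟨k, hkr, hks⟩ := hk
    exact exists_mem_SO_conj_Ebasis_of_ne hpq.ne hrs.ne hkr hks
  · have hmem : ∀ k, k = r ∨ k = s := fun k => by
      by_contra h
      exact hk ⟨k, not_or.1 h⟩
    obtain ⟨rfl, rfl⟩ : p = r ∧ q = s := by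
      rcases hmem p with rfl | rfl <;> rcases hmem q with rfl | rfl <;>
        simp_all [lt_asymm hrs]
    exact ⟨1, ⟨by simp, by simp⟩, by simp⟩

end SignedPermutation

lemma exists_mem_SO_hFun_conj {n : ℕ} {f : Matrix (Fin n) (Fin n) ℝ → ℝ}
    (hf : ∀ Q ∈ SO n, ∀ Z, f (Q * Z * Qᵀ) = f Z) {R : Matrix (Fin n) (Fin n) ℝ} (hR : R ∈ SO n)
    {p q r s : Fin n} (hpq : p < q) (hrs : r < s) :
    ∃ Q ∈ SO n, ∀ Z, hFun f R p q (Q * Z * Qᵀ) = hFun f R r s Z := by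
  obtain ⟨P, hP, hPE⟩ := exists_mem_SO_conj_Ebasis hpq hrs
  have hQ : R * P * Rᵀ ∈ SO n := mul_mem_SO (mul_mem_SO hR hP) (transpose_mem_SO hR)
  refine ⟨R * P * Rᵀ, hQ, fun Z => ?_⟩
  have hRR := transpose_mul_self_of_mem_ON hR.1
  have hE : (R * P * Rᵀ)ᵀ * (R * Ebasis p q * Rᵀ) * (R * P * Rᵀ) = R * Ebasis r s * Rᵀ := by
    rw [← hPE]
    simp only [transpose_mul, transpose_transpose, Matrix.mul_assoc]
    simp only [← Matrix.mul_assoc Rᵀ R, hRR, Matrix.one_mul]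
  rw [hFun_conj hQ.1 (hf _ hQ), hE, hFun]

theorem stmt6_general {n : ℕ} (μ : Measure (Matrix (Fin n) (Fin n) ℝ))
    (hμ : IsHaarSO n μ) (f : Matrix (Fin n) (Fin n) ℝ → ℝ)
    (hspec : ∀ Q ∈ ON n, ∀ Z, f (Q * Z * Qᵀ) = f Z)
    (R : Matrix (Fin n) (Fin n) ℝ) (hR : R ∈ SO n)
    (p q r s : Fin n) (hpq : p < q) (hrs : r < s) :
    ∀ t : ℝ,
      ∫ Z in {Z | Z ∈ SO n ∧ hFun f R p q Z ≤ t}, f Z ∂μ =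
        ∫ Z in {Z | Z ∈ SO n ∧ hFun f R r s Z ≤ t}, f Z ∂μ := by
  intro t
  obtain ⟨Q, hQ, hhQ⟩ := exists_mem_SO_hFun_conj (fun Q hQ => hspec Q hQ.1) hR hpq hrs
  have hpre : (fun Z => Q * Z * Qᵀ) ⁻¹' {Z | Z ∈ SO n ∧ hFun f R p q Z ≤ t} =
      {Z | Z ∈ SO n ∧ hFun f R r s Z ≤ t} := by
    ext Z
    simp only [Set.mem_preimage, Set.mem_ofPred_eq, conj_mem_SO_iff hQ, hhQ]
  calc ∫ Z in {Z | Z ∈ SO n ∧ hFun f R p q Z ≤ t}, f Z ∂μ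
      = ∫ Z in (fun Z => Q * Z * Qᵀ) ⁻¹' {Z | Z ∈ SO n ∧ hFun f R p q Z ≤ t},
          f (Q * Z * Qᵀ) ∂μ :=
        ((measurePreserving_conj hμ hQ).setIntegral_preimage_emb
          (measurableEmbedding_conj hQ.1) f _).symm
    _ = ∫ Z in {Z | Z ∈ SO n ∧ hFun f R r s Z ≤ t}, f Z ∂μ := by
        simp only [hpre, hspec Q hQ.1]

theorem stmt6 {n : ℕ} (hn : 2 ≤ n) (μ : Measure (Matrix (Fin n) (Fin n) ℝ))
    (hμ : IsHaarSO n μ) (f : Matrix (Fin n) (Fin n) ℝ → ℝ)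
    (hf : ContDiff ℝ 1 f) (hpos : ∀ Z, 0 < f Z)
    (hspec : ∀ Q ∈ ON n, ∀ Z, f (Q * Z * Qᵀ) = f Z)
    (hnorm : ∫ Z, f Z ∂μ = 1)
    (R : Matrix (Fin n) (Fin n) ℝ) (hR : R ∈ SO n)
    (p q r s : Fin n) (hpq : p < q) (hrs : r < s) :
    ∀ t : ℝ,
      ∫ Z in {Z | Z ∈ SO n ∧ hFun f R p q Z ≤ t}, f Z ∂μ =
        ∫ Z in {Z | Z ∈ SO n ∧ hFun f R r s Z ≤ t}, f Z ∂μ :=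
  stmt6_general μ hμ f hspec R hR p q r s hpq hrs
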